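/- arXiv:2408.13045 — 4 statements merged into one kernel-verified Lean document; each statement's English description precedes it below -/
import Mathlib

section
/- Let π ∝ exp(-f) be a probability distribution on ℝ^d where f is α-strongly convex with minimizer (mode) x*. Then the second moment about the mode satisfies ∫ ‖x - x*‖² dπ(x) ≤ d/α. -/
/-!
Write `D x = ⟪∇f x, x - x⋆⟫`. Convexity at `x` gives `f (x⋆ + (1 + s) • (x - x⋆)) ≥ f x + s * D x`,
and the homothety `x ↦ x⋆ + (1 + s) • (x - x⋆)` scales Lebesgue measure by `(1 + s) ^ d`. Integrating
`exp (-f)` both ways gives `∫ exp (-f) * (1 - exp (-s * D)) / s ≤ (1 - (1 + s) ^ (-d)) * Z / s ≤ d * Z`,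
and Fatou's lemma as `s → 0` yields `∫ D * exp (-f) ≤ d * Z`: one half of the integration by parts
identity `∫ ⟪∇f x, x - x⋆⟫ dπ = d`, obtained without any regularity of `f`. Strong convexity together
with `∇f x⋆ = 0` gives `D x ≥ α * ‖x - x⋆‖ ^ 2`.
-/

open MeasureTheory Real Filter Topology Module
open scoped InnerProductSpace

theorem one_sub_inv_one_add_pow_le (n : ℕ) {s : ℝ} (hs : 0 ≤ s) : 1 - ((1 + s) ^ n)⁻¹ ≤ n * s := by
  have hpow : (1 + s) ^ n ≤ exp (n * s) := by
    rw [exp_nat_mul]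
    exact pow_le_pow_left₀ (by linarith) (by linarith [add_one_le_exp s]) n
  have hinv : exp (-(n * s)) ≤ ((1 + s) ^ n)⁻¹ := by
    rw [exp_neg]
    exact inv_anti₀ (by positivity) hpow
  linarith [add_one_le_exp (-(n * s))]

theorem tendsto_one_sub_exp_neg_mul_div (u : ℝ) :
    Tendsto (fun s => (1 - exp (-(s * u))) / s) (𝓝[≠] 0) (𝓝 u) := by
  have h : HasDerivAt (fun s => 1 - exp (-(s * u))) u 0 := by
    simpa using (((hasDerivAt_id (0 : ℝ)).mul_const u).neg.exp).const_sub 1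
  simpa [div_eq_inv_mul] using h.tendsto_slope_zero

section Fatou

variable {α : Type*} [MeasurableSpace α] {μ : Measure α}

theorem integrable_and_integral_le_of_tendsto {F : ℕ → α → ℝ} {G : α → ℝ} {C : ℝ}
    (hF : ∀ n, Integrable (F n) μ) (hF_nonneg : ∀ n, 0 ≤ᵐ[μ] F n)
    (hlim : ∀ᵐ x ∂μ, Tendsto (fun n => F n x) atTop (𝓝 (G x)))
    (hC : ∀ n, ∫ x, F n x ∂μ ≤ C) :
    Integrable G μ ∧ ∫ x, G x ∂μ ≤ C := by
  have hG_meas : AEStronglyMeasurable G μ :=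
    aestronglyMeasurable_of_tendsto_ae atTop (fun n => (hF n).1) hlim
  have hG_nonneg : 0 ≤ᵐ[μ] G := by
    filter_upwards [hlim, ae_all_iff.2 hF_nonneg] with x hx h0
    exact ge_of_tendsto' hx h0
  have hC_nonneg : 0 ≤ C := (integral_nonneg_of_ae (hF_nonneg 0)).trans (hC 0)
  have hlintegral : ∫⁻ x, ENNReal.ofReal (G x) ∂μ ≤ ENNReal.ofReal C := calc
    ∫⁻ x, ENNReal.ofReal (G x) ∂μ = ∫⁻ x, liminf (fun n => ENNReal.ofReal (F n x)) atTop ∂μ :=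
        lintegral_congr_ae <| hlim.mono fun x hx =>
          ((ENNReal.continuous_ofReal.tendsto _).comp hx).liminf_eq.symm
    _ ≤ liminf (fun n => ∫⁻ x, ENNReal.ofReal (F n x) ∂μ) atTop :=
        lintegral_liminf_le' fun n => (hF n).1.aemeasurable.ennreal_ofReal
    _ ≤ ENNReal.ofReal C := by
        refine liminf_le_of_le (by isBoundedDefault) fun b hb => ?_
        obtain ⟨n, hn⟩ := hb.exists
        rw [← ofReal_integral_eq_lintegral_ofReal (hF n) (hF_nonneg n)] at hn
        exact hn.trans (ENNReal.ofReal_le_ofReal (hC n))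
  refine ⟨⟨hG_meas, (hasFiniteIntegral_iff_ofReal hG_nonneg).2
    (hlintegral.trans_lt ENNReal.ofReal_lt_top)⟩, ?_⟩
  rw [integral_eq_lintegral_of_nonneg_ae hG_nonneg hG_meas]
  exact ENNReal.toReal_le_of_le_ofReal hC_nonneg hlintegral

end Fatou

section Subgradient

variable {E : Type*} [NormedAddCommGroup E] [InnerProductSpace ℝ E]

theorem IsLocalMin.gradient_eq_zero [CompleteSpace E] {f : E → ℝ} {a : E} (h : IsLocalMin f a) :
    gradient f a = 0 := by
  rw [gradient, h.fderiv_eq_zero, map_zero]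

theorem measurable_gradient [CompleteSpace E] [MeasurableSpace E] [BorelSpace E] (f : E → ℝ) :
    Measurable (gradient f) :=
  (InnerProductSpace.toDual ℝ E).symm.continuous.measurable.comp (measurable_fderiv ℝ f)

section

variable {f : E → ℝ} {g : E → E} {c : E}

theorem inner_subgradient_sub_nonneg (hsub : ∀ x y, f x + ⟪g x, y - x⟫_ℝ ≤ f y)
    (hmin : ∀ x, f c ≤ f x) (x : E) : 0 ≤ ⟪g x, x - c⟫_ℝ := by
  have h := hsub x c
  rw [← neg_sub, inner_neg_right] at h
  linarith [hmin x]

theorem mul_norm_sub_sq_le_inner_sub {α : ℝ}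
    (hstrong : ∀ x y, f x + ⟪g x, y - x⟫_ℝ + α / 2 * ‖y - x‖ ^ 2 ≤ f y) (hc : g c = 0) (x : E) :
    α * ‖x - c‖ ^ 2 ≤ ⟪g x, x - c⟫_ℝ := by
  have hcx := hstrong c x
  have hxc := hstrong x c
  rw [hc, inner_zero_left] at hcx
  rw [← neg_sub, inner_neg_right, norm_neg] at hxc
  linarith

theorem exp_neg_comp_homothety_le (hsub : ∀ x y, f x + ⟪g x, y - x⟫_ℝ ≤ f y) (x : E) (s : ℝ) :
    exp (-f (c + (1 + s) • (x - c))) ≤ exp (-f x) * exp (-(s * ⟪g x, x - c⟫_ℝ)) := by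
  have h := hsub x (c + (1 + s) • (x - c))
  rw [show c + (1 + s) • (x - c) - x = s • (x - c) by module, real_inner_smul_right] at h
  rw [← exp_add, exp_le_exp]
  linarith

end

variable [FiniteDimensional ℝ E] [MeasurableSpace E] [BorelSpace E] {μ : Measure E}
  [μ.IsAddHaarMeasure]

theorem integral_comp_homothety {F : Type*} [NormedAddCommGroup F] [NormedSpace ℝ F]
    (φ : E → F) (c : E) (t : ℝ) :
    ∫ x, φ (c + t • (x - c)) ∂μ = |(t ^ finrank ℝ E)⁻¹| • ∫ x, φ x ∂μ := by
  rw [integral_sub_right_eq_self (fun x => φ (c + t • x)) c,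
    Measure.integral_comp_smul μ (fun x => φ (c + x)), integral_add_left_eq_self]

variable {f : E → ℝ} {g : E → E} {c : E}

theorem integral_exp_neg_mul_one_sub_exp_div_le (hsub : ∀ x y, f x + ⟪g x, y - x⟫_ℝ ≤ f y)
    (hmin : ∀ x, f c ≤ f x) (hg : AEStronglyMeasurable g μ)
    (hint : Integrable (fun x => exp (-f x)) μ) {s : ℝ} (hs : 0 < s) :
    ∫ x, exp (-f x) * ((1 - exp (-(s * ⟪g x, x - c⟫_ℝ))) / s) ∂μ ≤
      finrank ℝ E * ∫ x, exp (-f x) ∂μ := by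
  set Z := ∫ x, exp (-f x) ∂μ
  have hD_nonneg := inner_subgradient_sub_nonneg hsub hmin
  have hint' : Integrable (fun x => exp (-f x) * exp (-(s * ⟪g x, x - c⟫_ℝ))) μ := by
    refine hint.mul_bdd (by fun_prop) (c := 1) (ae_of_all _ fun x => ?_)
    rw [norm_of_nonneg (exp_pos _).le, exp_le_one_iff, neg_nonpos]
    exact mul_nonneg hs.le (hD_nonneg x)
  have hlower : ((1 + s) ^ finrank ℝ E)⁻¹ * Z ≤
      ∫ x, exp (-f x) * exp (-(s * ⟪g x, x - c⟫_ℝ)) ∂μ := calc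
    ((1 + s) ^ finrank ℝ E)⁻¹ * Z = ∫ x, exp (-f (c + (1 + s) • (x - c))) ∂μ := by
        rw [integral_comp_homothety (fun x => exp (-f x)) c, abs_of_pos (by positivity),
          smul_eq_mul]
    _ ≤ _ := integral_mono_of_nonneg (ae_of_all _ fun x => (exp_pos _).le) hint'
        (ae_of_all _ fun x => exp_neg_comp_homothety_le hsub x s)
  calc ∫ x, exp (-f x) * ((1 - exp (-(s * ⟪g x, x - c⟫_ℝ))) / s) ∂μ
      = (Z - ∫ x, exp (-f x) * exp (-(s * ⟪g x, x - c⟫_ℝ)) ∂μ) / s := by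
        simp_rw [mul_div_assoc', mul_sub, mul_one]
        rw [integral_div, integral_sub hint hint']
    _ ≤ (Z - ((1 + s) ^ finrank ℝ E)⁻¹ * Z) / s := by gcongr
    _ ≤ finrank ℝ E * Z := by
        have hZ : 0 ≤ Z := integral_nonneg fun x => (exp_pos (-f x)).le
        rw [div_le_iff₀ hs]
        nlinarith [one_sub_inv_one_add_pow_le (finrank ℝ E) hs.le]

theorem integrable_and_integral_exp_neg_mul_inner_subgradient_le
    (hsub : ∀ x y, f x + ⟪g x, y - x⟫_ℝ ≤ f y) (hmin : ∀ x, f c ≤ f x)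
    (hg : AEStronglyMeasurable g μ) (hint : Integrable (fun x => exp (-f x)) μ) :
    Integrable (fun x => exp (-f x) * ⟪g x, x - c⟫_ℝ) μ ∧
      ∫ x, exp (-f x) * ⟪g x, x - c⟫_ℝ ∂μ ≤ finrank ℝ E * ∫ x, exp (-f x) ∂μ := by
  set s : ℕ → ℝ := fun n => 1 / (n + 1)
  have hs_pos : ∀ n, 0 < s n := fun n => by positivity
  have hs_lim : Tendsto s atTop (𝓝[≠] 0) := tendsto_nhdsWithin_iff.2
    ⟨tendsto_one_div_add_atTop_nhds_zero_nat, Eventually.of_forall fun n => (hs_pos n).ne'⟩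
  have hD_nonneg := inner_subgradient_sub_nonneg hsub hmin
  have h_one_sub_nonneg : ∀ n x, 0 ≤ 1 - exp (-(s n * ⟪g x, x - c⟫_ℝ)) := fun n x =>
    sub_nonneg.2 <| exp_le_one_iff.2 <| neg_nonpos.2 <| mul_nonneg (hs_pos n).le (hD_nonneg x)
  refine integrable_and_integral_le_of_tendsto (fun n => ?_) (fun n => ae_of_all _ fun x => ?_)
    (ae_of_all _ fun x => ?_)
    (fun n => integral_exp_neg_mul_one_sub_exp_div_le hsub hmin hg hint (hs_pos n))
  · refine hint.mul_bdd (by fun_prop) (c := 1 / s n) (ae_of_all _ fun x => ?_)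
    rw [norm_of_nonneg (div_nonneg (h_one_sub_nonneg n x) (hs_pos n).le)]
    gcongr
    linarith [exp_pos (-(s n * ⟪g x, x - c⟫_ℝ))]
  · exact mul_nonneg (exp_pos _).le (div_nonneg (h_one_sub_nonneg n x) (hs_pos n).le)
  · exact ((tendsto_one_sub_exp_neg_mul_div _).comp hs_lim).const_mul _

end Subgradient

/-- Second moment bound for strongly log-concave distributions:
if `f` is `α`-strongly convex with mode `x⋆` and `π ∝ exp (-f)`, then
`∫ ‖x - x⋆‖² dπ ≤ d / α`. -/
theorem second_moment_strongly_log_concave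
    (d : ℕ) (α : ℝ) (hα : 0 < α)
    (f : EuclideanSpace ℝ (Fin d) → ℝ)
    (hstrong : ∀ x y, f x + inner ℝ (gradient f x) (y - x) + α / 2 * ‖y - x‖ ^ 2 ≤ f y)
    (xstar : EuclideanSpace ℝ (Fin d))
    (hmode : ∀ x, f xstar ≤ f x)
    (Z : ℝ) (hZ : Z = ∫ x, Real.exp (-f x)) (hZpos : 0 < Z) :
    ∫ x, ‖x - xstar‖ ^ 2 * (Real.exp (-f x) / Z) ≤ d / α := by
  have hint : Integrable (fun x => exp (-f x)) := by
    by_contra h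
    rw [integral_undef h] at hZ
    exact hZpos.ne' hZ
  have hsub : ∀ x y, f x + ⟪gradient f x, y - x⟫_ℝ ≤ f y := fun x y =>
    (le_add_of_nonneg_right (by positivity)).trans (hstrong x y)
  have hD := mul_norm_sub_sq_le_inner_sub hstrong
    (IsLocalMin.gradient_eq_zero (Eventually.of_forall hmode : IsLocalMin f xstar))
  obtain ⟨hDint, hDle⟩ := integrable_and_integral_exp_neg_mul_inner_subgradient_le hsub hmode
    (measurable_gradient f).aestronglyMeasurable hint
  rw [finrank_euclideanSpace_fin, ← hZ] at hDle
  calc ∫ x, ‖x - xstar‖ ^ 2 * (exp (-f x) / Z)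
      ≤ ∫ x, exp (-f x) * ⟪gradient f x, x - xstar⟫_ℝ / (α * Z) := by
        refine integral_mono_of_nonneg (ae_of_all _ fun x => by positivity) (hDint.div_const _)
          (ae_of_all _ fun x => ?_)
        rw [le_div_iff₀ (by positivity)]
        field_simp
        linarith [hD x]
    _ = (∫ x, exp (-f x) * ⟪gradient f x, x - xstar⟫_ℝ) / (α * Z) := integral_div _ _
    _ ≤ d * Z / (α * Z) := by gcongr
    _ = d / α := mul_div_mul_right _ _ hZpos.ne'
end

section
/- Let X₁, ..., X_n be {0,1}-valued random variables distributed uniformly over all binary vectors with exactly k ones (i.e., Bernoullis conditioned on ∑ᵢ Xᵢ = k), and let f(x) = ∑ᵢ αᵢ xᵢ with all αᵢ ≥ 0. Then for all t > 0, P[|f(X) - E[f(X)]| ≥ t] ≤ 2·exp(-t² / (16·∑_{i=1}^k (α↓ᵢ)²)), where α↓ is the non-increasing rearrangement of (α₁,...,α_n). -/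
/-!
Chatterjee's exchangeable-pair method. For a `k`-subset `A` and `i ∈ A`, `j ∉ A`, exchanging `i`
for `j` gives a `k`-subset `A'` with `f A - f A' = αᵢ - αⱼ`, and `(A, i, j) ↦ (A', j, i)` is an
involution of the set of such triples. Since `∑_{i ∈ A, j ∉ A} (αᵢ - αⱼ) = n (f A - E f)`, the
derivative of `M(λ) = ∑_A exp (λ (f A - E f))` becomes, up to the factor `n`, a sum over triples
that antisymmetrizes under the involution; `(x - y)(eˣ - eʸ) ≤ (x - y)² (eˣ + eʸ) / 2` then bounds
`λ M'(λ)` by `λ² / (2n) ∑_A (∑_{i ∈ A, j ∉ A} (αᵢ - αⱼ)²) exp (λ (f A - E f))`. The inner sum is at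
most `4 n V` with `V = ∑_{i < k} (α↓ᵢ)²`, because a `k`-subset carries at most `V` of the squared
mass and `k ∑ αᵢ² ≤ n V`. Hence `λ M' ≤ 2 V λ² M`, so `M(λ) ≤ M(0) exp (V λ²)`, and Chernoff's
bound gives `2 exp (-t² / (4 V))`, which is stronger than the claim.
-/

open Finset Real

theorem Monotone.mul_apply_nonneg {g : ℝ → ℝ} (hg : Monotone g) (h0 : g 0 = 0) (u : ℝ) :
    0 ≤ u * g u := by
  rcases le_total 0 u with hu | hu
  · exact mul_nonneg hu (h0 ▸ hg hu)
  · exact mul_nonneg_of_nonpos_of_nonpos hu (h0 ▸ hg hu)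

theorem Real.mul_sinh_le_sq_mul_cosh (v : ℝ) : v * sinh v ≤ v ^ 2 * cosh v := by
  have hmono : Monotone fun u => u * cosh u - sinh u :=
    monotone_of_hasDerivAt_nonneg
      (fun u => ((hasDerivAt_id u).mul (hasDerivAt_cosh u)).sub (hasDerivAt_sinh u))
      fun u => by simpa using sinh_strictMono.monotone.mul_apply_nonneg sinh_zero u
  nlinarith [hmono.mul_apply_nonneg (by simp) v]

/-- With `m = (x + y) / 2` and `v = (x - y) / 2` this is `v sinh v ≤ v² cosh v` times `4 eᵐ`. -/
theorem Real.sub_mul_exp_sub_exp_le (x y : ℝ) :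
    (x - y) * (exp x - exp y) ≤ (x - y) ^ 2 / 2 * (exp x + exp y) := by
  have key := mul_sinh_le_sq_mul_cosh ((x - y) / 2)
  rw [sinh_eq, cosh_eq] at key
  have hx : exp x = exp ((x + y) / 2) * exp ((x - y) / 2) := by rw [← exp_add]; ring_nf
  have hy : exp y = exp ((x + y) / 2) * exp (-((x - y) / 2)) := by rw [← exp_add]; ring_nf
  rw [hx, hy]
  nlinarith [mul_le_mul_of_nonneg_left key (exp_pos ((x + y) / 2)).le]

theorem le_mul_exp_sq_of_mul_deriv_le {M M' : ℝ → ℝ} {c : ℝ} (hM : ∀ s, HasDerivAt M (M' s) s)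
    (h : ∀ s, s * M' s ≤ 2 * c * s ^ 2 * M s) (s : ℝ) : M s ≤ M 0 * exp (c * s ^ 2) := by
  -- `G` decreases away from `0` in both directions
  set G : ℝ → ℝ := fun s => M s * exp (-(c * s ^ 2))
  have hG : ∀ s, HasDerivAt G ((M' s - 2 * c * s * M s) * exp (-(c * s ^ 2))) s := fun s => by
    have hq : HasDerivAt (fun s => -(c * s ^ 2)) (-(c * (2 * s))) s := by
      simpa using ((hasDerivAt_pow 2 s).const_mul c).fun_neg
    exact ((hM s).fun_mul hq.exp).congr_deriv (by ring)
  have hsign : ∀ s, s * ((M' s - 2 * c * s * M s) * exp (-(c * s ^ 2))) ≤ 0 := fun s => by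
    rw [← mul_assoc]
    exact mul_nonpos_of_nonpos_of_nonneg (by linarith [h s]) (exp_pos _).le
  have hGs : G s ≤ G 0 := by
    rcases le_total 0 s with hs | hs
    · refine antitoneOn_of_hasDerivWithinAt_nonpos (convex_Ici 0)
        (fun x _ => (hG x).continuousAt.continuousWithinAt)
        (fun x _ => (hG x).hasDerivWithinAt) (fun x hx => ?_) Set.self_mem_Ici hs hs
      rw [interior_Ici] at hx
      exact nonpos_of_mul_nonpos_right (hsign x) hx
    · refine monotoneOn_of_hasDerivWithinAt_nonneg (convex_Iic 0)
        (fun x _ => (hG x).continuousAt.continuousWithinAt)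
        (fun x _ => (hG x).hasDerivWithinAt) (fun x hx => ?_) hs Set.self_mem_Iic hs
      rw [interior_Iic] at hx
      exact nonneg_of_mul_nonpos_right (hsign x) hx
  have hMs : M s = G s * exp (c * s ^ 2) := by
    simp only [G, mul_assoc, ← exp_add, neg_add_cancel, exp_zero, mul_one]
  rw [hMs]
  gcongr
  simpa [G] using hGs

theorem card_filter_ge_le_of_sum_exp_le {γ : Type*} {S : Finset γ} {g : γ → ℝ} {C c t : ℝ}
    (hc : 0 < c) (ht : 0 ≤ t) (hmgf : ∀ s, ∑ x ∈ S, exp (s * g x) ≤ C * exp (c * s ^ 2)) :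
    (#{x ∈ S | t ≤ g x} : ℝ) ≤ C * exp (-t ^ 2 / (4 * c)) := by
  set s := t / (2 * c)
  have hs : 0 ≤ s := by positivity
  have markov : (#{x ∈ S | t ≤ g x} : ℝ) * exp (s * t) ≤ ∑ x ∈ S, exp (s * g x) :=
    calc (#{x ∈ S | t ≤ g x} : ℝ) * exp (s * t)
        = ∑ x ∈ S with t ≤ g x, exp (s * t) := by rw [sum_const, nsmul_eq_mul]
      _ ≤ ∑ x ∈ S with t ≤ g x, exp (s * g x) :=
        sum_le_sum fun x hx => exp_le_exp.2 (mul_le_mul_of_nonneg_left (mem_filter.1 hx).2 hs)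
      _ ≤ ∑ x ∈ S, exp (s * g x) :=
        sum_le_sum_of_subset_of_nonneg (filter_subset _ _) fun _ _ _ => (exp_pos _).le
  have hexp : exp (-t ^ 2 / (4 * c)) = exp (c * s ^ 2) / exp (s * t) := by
    rw [← exp_sub]; congr 1; simp only [s]; field_simp; ring
  rw [hexp, mul_div_assoc', le_div_iff₀ (exp_pos _)]
  exact markov.trans (hmgf s)

theorem card_filter_abs_ge_le_of_sum_exp_le {γ : Type*} {S : Finset γ} {g : γ → ℝ} {C c t : ℝ}
    (hc : 0 < c) (ht : 0 ≤ t) (hmgf : ∀ s, ∑ x ∈ S, exp (s * g x) ≤ C * exp (c * s ^ 2)) :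
    (#{x ∈ S | t ≤ |g x|} : ℝ) ≤ 2 * C * exp (-t ^ 2 / (4 * c)) := by
  classical
  have hsplit : #{x ∈ S | t ≤ |g x|} ≤ #{x ∈ S | t ≤ g x} + #{x ∈ S | t ≤ -g x} := by
    simp only [le_abs, filter_or]
    exact card_union_le _ _
  have hneg : ∀ s, ∑ x ∈ S, exp (s * -g x) ≤ C * exp (c * s ^ 2) := fun s => by
    simpa [neg_mul, mul_neg] using hmgf (-s)
  have h1 := card_filter_ge_le_of_sum_exp_le hc ht hmgf
  have h2 := card_filter_ge_le_of_sum_exp_le hc ht hneg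
  have := (Nat.cast_le (α := ℝ)).2 hsplit
  push_cast at this
  linarith

namespace Finset

section Involution

variable {τ : Type*} {T : Finset τ} {e : τ → τ}

theorem sum_comp_of_involution {M : Type*} [AddCommMonoid M] (he : ∀ p ∈ T, e p ∈ T)
    (hee : ∀ p ∈ T, e (e p) = p) (F : τ → M) : ∑ p ∈ T, F (e p) = ∑ p ∈ T, F p :=
  sum_nbij' e e he he hee hee fun _ _ => rfl

theorem mul_sum_sub_mul_exp_le (he : ∀ p ∈ T, e p ∈ T) (hee : ∀ p ∈ T, e (e p) = p)
    (φ : τ → ℝ) (s : ℝ) :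
    s * ∑ p ∈ T, (φ p - φ (e p)) * exp (s * φ p) ≤
      s ^ 2 / 2 * ∑ p ∈ T, (φ p - φ (e p)) ^ 2 * exp (s * φ p) := by
  have hanti : ∑ p ∈ T, (φ p - φ (e p)) * exp (s * φ (e p)) =
      -∑ p ∈ T, (φ p - φ (e p)) * exp (s * φ p) := by
    rw [← sum_comp_of_involution he hee, ← sum_neg_distrib]
    refine sum_congr rfl fun p hp => ?_
    rw [hee p hp]; ring
  have hsymm : ∑ p ∈ T, (φ p - φ (e p)) ^ 2 * exp (s * φ (e p)) =
      ∑ p ∈ T, (φ p - φ (e p)) ^ 2 * exp (s * φ p) := by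
    rw [← sum_comp_of_involution he hee]
    refine sum_congr rfl fun p hp => ?_
    rw [hee p hp]; ring
  calc s * ∑ p ∈ T, (φ p - φ (e p)) * exp (s * φ p)
      = 1 / 2 * (s * ∑ p ∈ T, (φ p - φ (e p)) * exp (s * φ p)
          - s * ∑ p ∈ T, (φ p - φ (e p)) * exp (s * φ (e p))) := by rw [hanti]; ring
    _ = 1 / 2 * ∑ p ∈ T, (s * φ p - s * φ (e p)) * (exp (s * φ p) - exp (s * φ (e p))) := by
      rw [mul_sum, mul_sum, ← sum_sub_distrib]
      exact congrArg _ (sum_congr rfl fun p _ => by ring)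
    _ ≤ 1 / 2 * ∑ p ∈ T, (s * φ p - s * φ (e p)) ^ 2 / 2 * (exp (s * φ p) + exp (s * φ (e p))) := by
      gcongr ?_ * ?_
      exact sum_le_sum fun p _ => sub_mul_exp_sub_exp_le _ _
    _ = s ^ 2 / 4 * (∑ p ∈ T, (φ p - φ (e p)) ^ 2 * exp (s * φ p)
          + ∑ p ∈ T, (φ p - φ (e p)) ^ 2 * exp (s * φ (e p))) := by
      rw [← sum_add_distrib, mul_sum, mul_sum]
      exact sum_congr rfl fun p _ => by ring
    _ = s ^ 2 / 2 * ∑ p ∈ T, (φ p - φ (e p)) ^ 2 * exp (s * φ p) := by rw [hsymm]; ring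

end Involution

variable {ι : Type*} [DecidableEq ι]

def exchange (A : Finset ι) (i j : ι) : Finset ι := insert j (A.erase i)

section Exchange

variable {A : Finset ι} {i j : ι}

theorem card_exchange (hi : i ∈ A) (hj : j ∉ A) : #(A.exchange i j) = #A := by
  rw [exchange, card_insert_of_notMem (fun h => hj (mem_of_mem_erase h)), card_erase_add_one hi]

theorem mem_exchange_left (hi : i ∈ A) (hj : j ∉ A) : i ∉ A.exchange i j := by
  simp only [exchange, mem_insert, mem_erase, not_or]
  exact ⟨fun h => hj (h ▸ hi), fun h => h.1 rfl⟩

theorem mem_exchange_right : j ∈ A.exchange i j := mem_insert_self _ _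

theorem exchange_exchange (hi : i ∈ A) (hj : j ∉ A) : (A.exchange i j).exchange j i = A := by
  ext l
  simp only [exchange, mem_insert, mem_erase]
  by_cases hli : l = i <;> by_cases hlj : l = j <;> simp_all

theorem sum_exchange {M : Type*} [AddCommGroup M] (f : ι → M) (hi : i ∈ A) (hj : j ∉ A) :
    ∑ l ∈ A.exchange i j, f l = ∑ l ∈ A, f l - f i + f j := by
  rw [exchange, sum_insert (fun h => hj (mem_of_mem_erase h)), sum_erase_eq_sub hi, add_comm]

end Exchange

variable [Fintype ι]

def exchangeTriples (k : ℕ) : Finset (Finset ι × ι × ι) :=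
  {p | #p.1 = k ∧ p.2.1 ∈ p.1 ∧ p.2.2 ∉ p.1}

def exchangeMove (p : Finset ι × ι × ι) : Finset ι × ι × ι :=
  (p.1.exchange p.2.1 p.2.2, p.2.2, p.2.1)

variable {k : ℕ} {p : Finset ι × ι × ι}

theorem mem_exchangeTriples : p ∈ exchangeTriples k ↔ #p.1 = k ∧ p.2.1 ∈ p.1 ∧ p.2.2 ∉ p.1 := by
  simp [exchangeTriples]

theorem exchangeMove_mem (hp : p ∈ exchangeTriples k) : exchangeMove p ∈ exchangeTriples k := by
  obtain ⟨hk, hi, hj⟩ := mem_exchangeTriples.1 hp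
  exact mem_exchangeTriples.2
    ⟨(card_exchange hi hj).trans hk, mem_exchange_right, mem_exchange_left hi hj⟩

theorem exchangeMove_exchangeMove (hp : p ∈ exchangeTriples k) :
    exchangeMove (exchangeMove p) = p := by
  obtain ⟨-, hi, hj⟩ := mem_exchangeTriples.1 hp
  simp only [exchangeMove, exchange_exchange hi hj]

theorem sum_exchangeTriples_mul (G : ι → ι → ℝ) (w : Finset ι → ℝ) :
    ∑ p ∈ exchangeTriples k, G p.2.1 p.2.2 * w p.1 =
      ∑ A ∈ powersetCard k univ, (∑ i ∈ A, ∑ j ∈ Aᶜ, G i j) * w A := by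
  rw [sum_finset_product (exchangeTriples k) (powersetCard k univ) (fun A => A ×ˢ Aᶜ)
    (fun p => by simp [mem_exchangeTriples])]
  simp only [sum_product, sum_mul]

theorem sum_sum_compl_sub (α : ι → ℝ) (A : Finset ι) :
    ∑ i ∈ A, ∑ j ∈ Aᶜ, (α i - α j) = Fintype.card ι * ∑ i ∈ A, α i - #A * ∑ i, α i := by
  have hcard : (#A : ℝ) + #Aᶜ = Fintype.card ι := by exact_mod_cast card_add_card_compl A
  simp only [sum_sub_distrib, sum_const, nsmul_eq_mul, ← mul_sum, ← sum_add_sum_compl A α,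
    ← hcard]
  ring

theorem sum_sum_compl_sub_sq_le (α : ι → ℝ) (A : Finset ι) :
    ∑ i ∈ A, ∑ j ∈ Aᶜ, (α i - α j) ^ 2 ≤
      2 * (Fintype.card ι * ∑ i ∈ A, α i ^ 2 + #A * ∑ i, α i ^ 2) := by
  have hcard : #Aᶜ ≤ Fintype.card ι := card_le_univ _
  calc ∑ i ∈ A, ∑ j ∈ Aᶜ, (α i - α j) ^ 2
      ≤ ∑ i ∈ A, ∑ j ∈ Aᶜ, (2 * α i ^ 2 + 2 * α j ^ 2) := by
        gcongr with i _ j _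
        nlinarith [sq_nonneg (α i + α j)]
    _ = 2 * (#Aᶜ * ∑ i ∈ A, α i ^ 2 + #A * ∑ j ∈ Aᶜ, α j ^ 2) := by
        simp only [sum_add_distrib, sum_const, nsmul_eq_mul, ← mul_sum]
        ring
    _ ≤ 2 * (Fintype.card ι * ∑ i ∈ A, α i ^ 2 + #A * ∑ i, α i ^ 2) := by
        gcongr
        exact subset_univ _

theorem sum_sub_sum_exchangeMove (α : ι → ℝ) (hp : p ∈ exchangeTriples k) :
    ∑ i ∈ p.1, α i - ∑ i ∈ (exchangeMove p).1, α i = α p.2.1 - α p.2.2 := by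
  obtain ⟨-, hi, hj⟩ := mem_exchangeTriples.1 hp
  rw [exchangeMove, sum_exchange α hi hj]
  ring

theorem sum_powersetCard_card_mul_sum_sub (α : ι → ℝ) (k : ℕ) :
    ∑ A ∈ powersetCard k univ, (Fintype.card ι * ∑ i ∈ A, α i - k * ∑ i, α i) = 0 := by
  have hinv := sum_comp_of_involution (fun _ => exchangeMove_mem (ι := ι) (k := k))
    (fun _ => exchangeMove_exchangeMove) fun p => ∑ i ∈ p.1, α i
  calc ∑ A ∈ powersetCard k univ, (Fintype.card ι * ∑ i ∈ A, α i - k * ∑ i, α i)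
      = ∑ A ∈ powersetCard k univ, (∑ i ∈ A, ∑ j ∈ Aᶜ, (α i - α j)) * 1 :=
        sum_congr rfl fun A hA => by
          rw [mul_one, sum_sum_compl_sub, mem_powersetCard_univ.1 hA]
    _ = ∑ p ∈ exchangeTriples k, (∑ i ∈ p.1, α i - ∑ i ∈ (exchangeMove p).1, α i) := by
        rw [← sum_exchangeTriples_mul]
        exact sum_congr rfl fun p hp => by rw [mul_one, sum_sub_sum_exchangeMove α hp]
    _ = 0 := by rw [sum_sub_distrib, hinv, sub_self]

theorem card_mul_mean_powersetCard_eq (α : ι → ℝ)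
    (hk : (powersetCard k (univ : Finset ι)).Nonempty) :
    Fintype.card ι *
        ((∑ A ∈ powersetCard k univ, ∑ i ∈ A, α i) / #(powersetCard k (univ : Finset ι))) =
      k * ∑ i, α i := by
  have h := sum_powersetCard_card_mul_sum_sub α k
  rw [sum_sub_distrib, sum_const, nsmul_eq_mul, ← mul_sum, sub_eq_zero] at h
  have hP : (#(powersetCard k (univ : Finset ι)) : ℝ) ≠ 0 := by exact_mod_cast hk.card_pos.ne'
  rw [← mul_div_assoc, h, mul_div_right_comm, div_self hP, one_mul]

theorem sum_exp_mul_sub_le [Nonempty ι] (α : ι → ℝ) {v E : ℝ}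
    (hquad : ∀ A ∈ powersetCard k univ, ∑ i ∈ A, ∑ j ∈ Aᶜ, (α i - α j) ^ 2 ≤ Fintype.card ι * v)
    (hE : Fintype.card ι * E = k * ∑ i, α i) (s : ℝ) :
    ∑ A ∈ powersetCard k univ, exp (s * (∑ i ∈ A, α i - E)) ≤
      #(powersetCard k (univ : Finset ι)) * exp (v / 4 * s ^ 2) := by
  have hn : (0 : ℝ) < Fintype.card ι := by exact_mod_cast Fintype.card_pos
  set g : Finset ι → ℝ := fun A => ∑ i ∈ A, α i - E
  have hdiff : ∀ p ∈ exchangeTriples k, g p.1 - g (exchangeMove p).1 = α p.2.1 - α p.2.2 :=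
    fun p hp => by rw [sub_sub_sub_cancel_right]; exact sum_sub_sum_exchangeMove α hp
  refine (le_mul_exp_sq_of_mul_deriv_le (c := v / 4)
    (M := fun s => ∑ A ∈ powersetCard k univ, exp (s * g A))
    (M' := fun s => ∑ A ∈ powersetCard k univ, g A * exp (s * g A))
    (fun s => HasDerivAt.fun_sum fun A _ => ?_) (fun s => ?_) s).trans_eq (by simp)
  · simpa [mul_comm] using ((hasDerivAt_id s).mul_const (g A)).exp
  have hlin : ∑ p ∈ exchangeTriples k, (g p.1 - g (exchangeMove p).1) * exp (s * g p.1) =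
      Fintype.card ι * ∑ A ∈ powersetCard k univ, g A * exp (s * g A) := by
    rw [sum_congr rfl fun p hp => by rw [hdiff p hp],
      sum_exchangeTriples_mul (fun i j => α i - α j) (fun A => exp (s * g A)), mul_sum]
    refine sum_congr rfl fun A hA => ?_
    rw [sum_sum_compl_sub, mem_powersetCard_univ.1 hA, ← hE]
    ring
  have hquad' : ∑ p ∈ exchangeTriples k, (g p.1 - g (exchangeMove p).1) ^ 2 * exp (s * g p.1) ≤
      Fintype.card ι * v * ∑ A ∈ powersetCard k univ, exp (s * g A) := by
    rw [sum_congr rfl fun p hp => by rw [hdiff p hp],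
      sum_exchangeTriples_mul (fun i j => (α i - α j) ^ 2) (fun A => exp (s * g A)), mul_sum]
    exact sum_le_sum fun A hA => mul_le_mul_of_nonneg_right (hquad A hA) (exp_pos _).le
  have key := mul_sum_sub_mul_exp_le (fun _ => exchangeMove_mem (k := k))
    (fun _ => exchangeMove_exchangeMove) (fun p => g p.1) s
  rw [hlin] at key
  refine le_of_mul_le_mul_left ?_ hn
  calc Fintype.card ι * (s * ∑ A ∈ powersetCard k univ, g A * exp (s * g A))
      ≤ s ^ 2 / 2 * (Fintype.card ι * v * ∑ A ∈ powersetCard k univ, exp (s * g A)) := by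
        linarith [mul_le_mul_of_nonneg_left hquad' (by positivity : (0 : ℝ) ≤ s ^ 2 / 2)]
    _ = Fintype.card ι * (2 * (v / 4) * s ^ 2 * ∑ A ∈ powersetCard k univ, exp (s * g A)) := by
        ring

theorem card_filter_abs_sub_mean_div_card_le [Nonempty ι] (α : ι → ℝ) {v t : ℝ}
    (hv : 0 < v) (ht : 0 ≤ t)
    (hquad : ∀ A ∈ powersetCard k univ, ∑ i ∈ A, ∑ j ∈ Aᶜ, (α i - α j) ^ 2 ≤ Fintype.card ι * v) :
    (#{A ∈ powersetCard k (univ : Finset ι) | t ≤ |∑ i ∈ A, α i -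
        (∑ B ∈ powersetCard k univ, ∑ i ∈ B, α i) / #(powersetCard k (univ : Finset ι))|} : ℝ) /
      #(powersetCard k (univ : Finset ι)) ≤ 2 * exp (-t ^ 2 / v) := by
  rcases (powersetCard k (univ : Finset ι)).eq_empty_or_nonempty with hP | hP
  · simpa [hP] using (exp_pos _).le
  refine div_le_of_le_mul₀ (by positivity) (by positivity) ?_
  have := card_filter_abs_ge_le_of_sum_exp_le (by positivity : 0 < v / 4) ht
    (sum_exp_mul_sub_le α hquad (card_mul_mean_powersetCard_eq α hP))
  rw [show 4 * (v / 4) = v by ring] at this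
  linarith

end Finset

theorem card_mul_sum_le_card_mul_sum {ι : Type*} {X Y : Finset ι} {f : ι → ℝ}
    (h : ∀ x ∈ X, ∀ y ∈ Y, f x ≤ f y) : (#Y : ℝ) * ∑ x ∈ X, f x ≤ #X * ∑ y ∈ Y, f y :=
  calc (#Y : ℝ) * ∑ x ∈ X, f x = ∑ x ∈ X, ∑ _y ∈ Y, f x := by
        rw [mul_sum]; simp only [sum_const, nsmul_eq_mul]
    _ ≤ ∑ x ∈ X, ∑ y ∈ Y, f y := sum_le_sum fun x hx => sum_le_sum fun y hy => h x hx y hy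
    _ = #X * ∑ y ∈ Y, f y := by simp only [sum_const, nsmul_eq_mul]

namespace Antitone

variable {n : ℕ} {h : Fin n → ℝ}

theorem sum_le_sum_filter_lt_card (hh : Antitone h) (B : Finset (Fin n)) :
    ∑ i ∈ B, h i ≤ ∑ i ∈ ({i | i < #B} : Finset (Fin n)), h i := by
  set I : Finset (Fin n) := {i | (i : ℕ) < #B}
  have hI : #I = #B := by
    simpa [I, Fin.card_filter_val_lt] using card_le_univ B
  have hcard : #(B \ I) = #(I \ B) := card_sdiff_comm hI.symm
  have hle : ∀ x ∈ B \ I, ∀ y ∈ I \ B, h x ≤ h y := fun x hx y hy => by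
    simp only [I, mem_sdiff, mem_filter, mem_univ, true_and, not_lt] at hx hy
    exact hh (Fin.le_def.2 (hy.1.le.trans hx.2))
  have hdiff : ∑ i ∈ B \ I, h i ≤ ∑ i ∈ I \ B, h i := by
    rcases Nat.eq_zero_or_pos #(I \ B) with h0 | hpos
    · rw [card_eq_zero.1 h0, card_eq_zero.1 (hcard.trans h0)]
    · have key := card_mul_sum_le_card_mul_sum hle
      rw [hcard] at key
      exact le_of_mul_le_mul_left key (by exact_mod_cast hpos)
  rw [← sum_inter_add_sum_sdiff B I, ← sum_inter_add_sum_sdiff I B, inter_comm]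
  linarith

theorem card_mul_sum_le (hh : Antitone h) {k : ℕ} (hk : k ≤ n) :
    (k : ℝ) * ∑ i, h i ≤ n * ∑ i ∈ ({i | i < k} : Finset (Fin n)), h i := by
  set I : Finset (Fin n) := {i | (i : ℕ) < k}
  have hI : (#I : ℝ) = k := by simp [I, Fin.card_filter_val_lt, hk]
  have hcard : (#I : ℝ) + #Iᶜ = n := by
    exact_mod_cast (card_add_card_compl I).trans (Fintype.card_fin n)
  have hle : ∀ x ∈ Iᶜ, ∀ y ∈ I, h x ≤ h y := fun x hx y hy => by
    simp only [I, mem_compl, mem_filter, mem_univ, true_and, not_lt] at hx hy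
    exact hh (Fin.le_def.2 (hy.le.trans hx))
  have key := card_mul_sum_le_card_mul_sum hle
  rw [hI] at key
  rw [← sum_add_sum_compl I h, ← hcard, hI]
  linarith

end Antitone

theorem sum_sum_compl_sub_sq_le_of_antitone {n : ℕ} {α : Fin n → ℝ} {σ : Equiv.Perm (Fin n)}
    (hσ : Antitone fun i => α (σ i) ^ 2) (A : Finset (Fin n)) :
    ∑ i ∈ A, ∑ j ∈ Aᶜ, (α i - α j) ^ 2 ≤
      n * (4 * ∑ i ∈ ({i | i < #A} : Finset (Fin n)), α (σ i) ^ 2) := by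
  set V := ∑ i ∈ ({i | i < #A} : Finset (Fin n)), α (σ i) ^ 2
  have hA : ∑ i ∈ A, α i ^ 2 ≤ V := by
    simpa [sum_map] using hσ.sum_le_sum_filter_lt_card (A.map σ.symm.toEmbedding)
  have hall : (#A : ℝ) * ∑ i, α i ^ 2 ≤ n * V := by
    simpa [Equiv.sum_comp σ (fun i => α i ^ 2)] using
      hσ.card_mul_sum_le ((card_le_univ A).trans_eq (Fintype.card_fin n))
  have := sum_sum_compl_sub_sq_le α A
  rw [Fintype.card_fin] at this
  linarith [mul_le_mul_of_nonneg_left hA (Nat.cast_nonneg (α := ℝ) n)]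

def boolIndicator {ι : Type*} [DecidableEq ι] : Finset ι ↪ (ι → Bool) where
  toFun A i := decide (i ∈ A)
  inj' A B h := by ext i; simpa using congrFun h i

@[simp]
theorem boolIndicator_apply {ι : Type*} [DecidableEq ι] (A : Finset ι) (i : ι) :
    boolIndicator A i = decide (i ∈ A) := rfl

theorem filter_card_eq_map_powersetCard {ι : Type*} [Fintype ι] [DecidableEq ι] (k : ℕ) :
    ({x | #{i | x i} = k} : Finset (ι → Bool)) = (powersetCard k univ).map boolIndicator := by
  ext x
  simp only [mem_filter, mem_univ, true_and, mem_map, mem_powersetCard_univ]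
  constructor
  · exact fun hx => ⟨({i | x i} : Finset ι), hx, funext fun i => by simp⟩
  · rintro ⟨A, hA, rfl⟩
    simpa using hA

theorem sum_mul_boolIndicator {ι : Type*} [Fintype ι] [DecidableEq ι] (α : ι → ℝ)
    (A : Finset ι) : ∑ i, α i * (if boolIndicator A i then 1 else 0) = ∑ i ∈ A, α i := by
  simp

theorem conditioned_bernoulli_linear_concentration_general
    (n k : ℕ) (α : Fin n → ℝ) (hα : ∀ i, 0 ≤ α i)
    (S : Finset (Fin n → Bool))
    (hS : S = Finset.univ.filter (fun x => (Finset.univ.filter (fun i => x i)).card = k))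
    (f : (Fin n → Bool) → ℝ)
    (hf : f = fun x => ∑ i, α i * (if x i then (1:ℝ) else 0))
    (E : ℝ) (hE : E = (∑ x ∈ S, f x) / S.card)
    (αdown : Fin n → ℝ) (σ : Equiv.Perm (Fin n))
    (hperm : αdown = α ∘ σ) (hanti : Antitone αdown)
    (t : ℝ) (ht : 0 < t) :
    ((S.filter (fun x => t ≤ |f x - E|)).card : ℝ) / S.card ≤
      2 * Real.exp (-t ^ 2 / (16 * ∑ i ∈ Finset.univ.filter (fun i : Fin n => (i : ℕ) < k),
        (αdown i) ^ 2)) := by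
  subst hS hf hE hperm
  set V := ∑ i ∈ Finset.univ.filter (fun i : Fin n => (i : ℕ) < k), (α ∘ σ) i ^ 2
  have hV0 : 0 ≤ V := sum_nonneg fun i _ => sq_nonneg _
  rcases hV0.eq_or_lt with hV | hV
  -- `-t ^ 2 / (16 * 0) = 0`, so the bound degenerates to `2`
  · rw [← hV, mul_zero, div_zero, exp_zero, mul_one]
    exact (div_le_one_of_le₀ (mod_cast card_filter_le _ _) (Nat.cast_nonneg _)).trans one_le_two
  have : Nonempty (Fin n) := let ⟨i, _⟩ := exists_ne_zero_of_sum_ne_zero hV.ne'; ⟨i⟩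
  have hsq : Antitone fun i => α (σ i) ^ 2 := fun i j hij => pow_le_pow_left₀ (hα _) (hanti hij) 2
  rw [filter_card_eq_map_powersetCard, filter_map, card_map, card_map, sum_map]
  simp only [Function.comp_def, sum_mul_boolIndicator]
  calc _ ≤ 2 * exp (-t ^ 2 / (4 * V)) :=
        card_filter_abs_sub_mean_div_card_le α (by positivity) ht.le fun A hA => by
          have := sum_sum_compl_sub_sq_le_of_antitone hsq A
          rw [Fintype.card_fin]
          rwa [mem_powersetCard_univ.1 hA] at this
    _ ≤ _ := by
        gcongr _ * exp ?_
        rw [neg_div, neg_div, neg_le_neg_iff]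
        exact div_le_div_of_nonneg_left (sq_nonneg t) (by positivity) (by linarith)

/-- Concentration of a nonnegative linear function of Bernoullis conditioned on
their sum being `k` (uniform over binary vectors with exactly `k` ones):
`P[|f(X) - E f(X)| ≥ t] ≤ 2 exp (-t² / (16 ∑_{i<k} (α↓ᵢ)²))`,
where `α↓` is the non-increasing rearrangement of `α`. -/
theorem conditioned_bernoulli_linear_concentration
    (n k : ℕ) (hk : k ≤ n) (α : Fin n → ℝ) (hα : ∀ i, 0 ≤ α i)
    (S : Finset (Fin n → Bool))
    (hS : S = Finset.univ.filter (fun x => (Finset.univ.filter (fun i => x i)).card = k))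
    (f : (Fin n → Bool) → ℝ)
    (hf : f = fun x => ∑ i, α i * (if x i then (1:ℝ) else 0))
    (E : ℝ) (hE : E = (∑ x ∈ S, f x) / S.card)
    (αdown : Fin n → ℝ) (σ : Equiv.Perm (Fin n))
    (hperm : αdown = α ∘ σ) (hanti : Antitone αdown)
    (t : ℝ) (ht : 0 < t) :
    ((S.filter (fun x => t ≤ |f x - E|)).card : ℝ) / S.card ≤
      2 * Real.exp (-t ^ 2 / (16 * ∑ i ∈ Finset.univ.filter (fun i : Fin n => (i : ℕ) < k),
        (αdown i) ^ 2)) :=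
  conditioned_bernoulli_linear_concentration_general n k α hα S hS f hf E hE αdown σ hperm hanti t
    ht
end

section
/- The volume of a spherical cap of height h (0 ≤ h ≤ r) of a d-dimensional Euclidean ball of radius r equals (1/2)·V_d·r^d·I_{(2rh-h²)/r²}((d+1)/2, 1/2), where V_d is the volume of the d-dimensional unit ball and I_x(a,b) is the regularized incomplete beta function. -/
/-
Cavalieri's principle: the slice of the cap at height `t = x₀ ∈ [r - h, r]` is a `(d-1)`-ball
of radius `√(r² - t²)`, so the cap has volume `V_{d-1} ∫_{r-h}^r (r² - t²)^{(d-1)/2} dt`.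
The substitution `s = (r² - t²)/r²` turns this integral into `r^d / 2` times the incomplete beta
integral `∫_0^x s^{(d+1)/2-1} (1-s)^{-1/2} ds` with `x = (2rh - h²)/r²`, and
`V_{d-1} · B((d+1)/2, 1/2) = V_d`.
-/

open MeasureTheory Real Set

/-- Regularized incomplete beta function `I_x(a,b)`. -/
noncomputable def regIncBeta (x a b : ℝ) : ℝ :=
  (∫ s in (0:ℝ)..x, s ^ (a - 1) * (1 - s) ^ (b - 1)) /
    (Real.Gamma a * Real.Gamma b / Real.Gamma (a + b))

noncomputable def unitBallVolume (d : ℕ) : ℝ := π ^ ((d : ℝ) / 2) / Gamma ((d : ℝ) / 2 + 1)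

lemma sqrt_pow_eq_rpow {x : ℝ} (hx : 0 ≤ x) (n : ℕ) : √x ^ n = x ^ ((n : ℝ) / 2) := by
  rw [sqrt_eq_rpow, ← rpow_natCast, ← rpow_mul hx]
  ring_nf

lemma volume_sum_sq_le (n : ℕ) {a : ℝ} (ha : 0 ≤ a) :
    volume {z : Fin n → ℝ | ∑ j, z j ^ 2 ≤ a} =
      ENNReal.ofReal (a ^ ((n : ℝ) / 2) * unitBallVolume n) := by
  rcases n.eq_zero_or_pos with rfl | hn
  · simp [ha, unitBallVolume, volume_pi]
  have : Nonempty (Fin n) := ⟨⟨0, hn⟩⟩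
  have hball : {z : Fin n → ℝ | ∑ j, z j ^ 2 ≤ a} =
      WithLp.toLp 2 ⁻¹' Metric.closedBall (0 : EuclideanSpace ℝ (Fin n)) √a := by
    ext z
    simp [EuclideanSpace.norm_eq, sqrt_le_sqrt_iff ha]
  rw [hball, (PiLp.volume_preserving_toLp (Fin n)).measure_preimage
      measurableSet_closedBall.nullMeasurableSet, EuclideanSpace.volume_closedBall,
    Fintype.card_fin, ← ENNReal.ofReal_pow (sqrt_nonneg a),
    ← ENNReal.ofReal_mul (by positivity),
    sqrt_pow_eq_rpow ha, sqrt_pow_eq_rpow pi_nonneg, unitBallVolume]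

lemma norm_le_iff_sum_sq_le {ι : Type*} [Fintype ι] {r : ℝ} (hr : 0 ≤ r)
    (x : EuclideanSpace ℝ ι) :
    ‖x‖ ≤ r ↔ ∑ i, x i ^ 2 ≤ r ^ 2 := by
  rw [← sq_le_sq₀ (norm_nonneg x) hr, EuclideanSpace.norm_sq_eq]
  simp [sq_abs]

lemma volume_cap_eq_lintegral (n : ℕ) {r : ℝ} (hr : 0 ≤ r) (c : ℝ) :
    volume {x : EuclideanSpace ℝ (Fin (n + 1)) | ‖x‖ ≤ r ∧ c ≤ x 0} =
      ∫⁻ t in Icc c r, volume {z : Fin n → ℝ | ∑ j, z j ^ 2 ≤ r ^ 2 - t ^ 2} := by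
  set S : Set (ℝ × (Fin n → ℝ)) := {p | p.1 ^ 2 + ∑ j, p.2 j ^ 2 ≤ r ^ 2 ∧ c ≤ p.1}
  have hS : MeasurableSet S := by
    have hq : Measurable fun p : ℝ × (Fin n → ℝ) => p.1 ^ 2 + ∑ j, p.2 j ^ 2 := by fun_prop
    exact (measurableSet_le hq measurable_const).inter
      (measurableSet_le measurable_const measurable_fst)
  have hcap : {x : EuclideanSpace ℝ (Fin (n + 1)) | ‖x‖ ≤ r ∧ c ≤ x 0} =
      (MeasurableEquiv.piFinSuccAbove (fun _ => ℝ) 0 ∘ WithLp.ofLp) ⁻¹' S := by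
    ext x
    simp [S, norm_le_iff_sum_sq_le hr, Fin.sum_univ_succ, MeasurableEquiv.piFinSuccAbove,
      Fin.tail]
  have hslice : ∀ t, volume (Prod.mk t ⁻¹' S) =
      (Icc c r).indicator
        (fun t => volume {z : Fin n → ℝ | ∑ j, z j ^ 2 ≤ r ^ 2 - t ^ 2}) t := by
    intro t
    by_cases ht : t ∈ Icc c r
    · rw [indicator_of_mem ht]
      refine congrArg volume (ext fun z => ?_)
      simp only [S, preimage_ofPred_eq, mem_ofPred_eq, ht.1, and_true]
      exact le_sub_iff_add_le'.symm
    · rw [indicator_of_notMem ht, ← measure_empty (μ := (volume : Measure (Fin n → ℝ)))]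
      refine congrArg volume (ext fun z => ?_)
      simp only [S, mem_preimage, mem_ofPred_eq, mem_empty_iff_false, iff_false, not_and]
      intro hle hct
      have hrt : r < t := lt_of_not_ge fun htr => ht ⟨hct, htr⟩
      nlinarith [Finset.sum_nonneg fun j (_ : j ∈ Finset.univ) => sq_nonneg (z j)]
  rw [hcap, ((volume_preserving_piFinSuccAbove _ 0).comp
      (PiLp.volume_preserving_ofLp _)).measure_preimage hS.nullMeasurableSet,
    Measure.volume_eq_prod, Measure.prod_apply hS, ← lintegral_indicator measurableSet_Icc]
  exact lintegral_congr hslice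

lemma toReal_volume_cap (n : ℕ) {r c : ℝ} (hr : 0 ≤ r) (hc : -r ≤ c) (hcr : c ≤ r) :
    (volume {x : EuclideanSpace ℝ (Fin (n + 1)) | ‖x‖ ≤ r ∧ c ≤ x 0}).toReal =
      unitBallVolume n * ∫ t in c..r, (r ^ 2 - t ^ 2) ^ ((n : ℝ) / 2) := by
  have hslice_nonneg : ∀ t ∈ Icc c r, 0 ≤ r ^ 2 - t ^ 2 := fun t ht => by
    nlinarith [ht.1, ht.2]
  have hV : 0 ≤ unitBallVolume n := by unfold unitBallVolume; positivity
  have hcont : Continuous fun t : ℝ => (r ^ 2 - t ^ 2) ^ ((n : ℝ) / 2) * unitBallVolume n :=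
    ((continuous_const.sub (continuous_pow 2)).rpow_const fun _ => Or.inr (by positivity)).mul
      continuous_const
  rw [volume_cap_eq_lintegral n hr c, setLIntegral_congr_fun measurableSet_Icc
      fun t ht => volume_sum_sq_le n (hslice_nonneg t ht),
    ← ofReal_integral_eq_lintegral_ofReal hcont.integrableOn_Icc
      ((ae_restrict_mem measurableSet_Icc).mono fun t ht => by
        have := hslice_nonneg t ht
        positivity),
    ENNReal.toReal_ofReal (setIntegral_nonneg measurableSet_Icc fun t ht => by
      have := hslice_nonneg t ht
      positivity),
    integral_Icc_eq_integral_Ioc, ← intervalIntegral.integral_of_le hcr,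
    intervalIntegral.integral_mul_const, mul_comm]

lemma image_sq_sub_sq_div_Ioo {r c : ℝ} (hr : 0 < r) (hc : 0 ≤ c) (hcr : c ≤ r) :
    (fun t => (r ^ 2 - t ^ 2) / r ^ 2) '' Ioo c r = Ioo 0 ((r ^ 2 - c ^ 2) / r ^ 2) := by
  have hanti : StrictAntiOn (fun t => (r ^ 2 - t ^ 2) / r ^ 2) (Icc c r) :=
    fun s hs t _ hst => by
      have : s ^ 2 < t ^ 2 := by nlinarith [hs.1]
      dsimp only
      gcongr
  rw [ContinuousOn.image_Ioo_of_strictAntiOn hcr (by fun_prop) hanti, sub_self, zero_div]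

lemma integral_rpow_mul_one_sub_rpow_neg_half {r c : ℝ} (a : ℝ) (hr : 0 < r) (hc : 0 ≤ c)
    (hcr : c ≤ r) :
    ∫ s in (0 : ℝ)..(r ^ 2 - c ^ 2) / r ^ 2, s ^ a * (1 - s) ^ (-(1 / 2) : ℝ) =
      2 / r ^ (2 * a + 1) * ∫ t in c..r, (r ^ 2 - t ^ 2) ^ a := by
  have hupper : 0 ≤ (r ^ 2 - c ^ 2) / r ^ 2 := div_nonneg (by nlinarith) (by positivity)
  rw [intervalIntegral.integral_of_le hupper, integral_Ioc_eq_integral_Ioo,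
    ← image_sq_sub_sq_div_Ioo hr hc hcr, integral_image_eq_integral_abs_deriv_smul
      measurableSet_Ioo (f' := fun t => -(2 * t) / r ^ 2) ?deriv ?inj,
    intervalIntegral.integral_of_le hcr, integral_Ioc_eq_integral_Ioo, ← integral_const_mul]
  case deriv =>
    intro t _
    exact (((hasDerivAt_pow 2 t).const_sub _).div_const _).hasDerivWithinAt.congr_deriv (by ring)
  case inj =>
    intro s hs t ht hst
    refine (sq_eq_sq₀ (hc.trans hs.1.le) (hc.trans ht.1.le)).mp ?_
    simpa using (div_left_inj' (by positivity)).mp hst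
  refine setIntegral_congr_fun measurableSet_Ioo fun t ht => ?_
  have ht0 : 0 < t := hc.trans_lt ht.1
  have hrt : 0 < r ^ 2 - t ^ 2 := by nlinarith [ht.2]
  have habs : |-(2 * t) / r ^ 2| = 2 * t / r ^ 2 := by
    rw [neg_div, abs_neg, abs_of_pos (by positivity)]
  have hbase : ((r ^ 2 - t ^ 2) / r ^ 2) ^ a = (r ^ 2 - t ^ 2) ^ a / r ^ (2 * a) := by
    rw [div_rpow hrt.le (by positivity), ← rpow_natCast, ← rpow_mul hr.le, Nat.cast_ofNat]
  have hweight : (1 - (r ^ 2 - t ^ 2) / r ^ 2) ^ (-(1 / 2) : ℝ) = r / t := by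
    rw [show 1 - (r ^ 2 - t ^ 2) / r ^ 2 = (t / r) ^ 2 by field_simp; ring, rpow_neg (sq_nonneg _),
      ← sqrt_eq_rpow, sqrt_sq (by positivity), inv_div]
  rw [smul_eq_mul, habs, hbase, hweight, rpow_add_one hr.ne']
  field_simp

lemma unitBallVolume_succ (n : ℕ) :
    unitBallVolume (n + 1) = unitBallVolume n *
      (Gamma ((n : ℝ) / 2 + 1) * Gamma (1 / 2) / Gamma ((n : ℝ) / 2 + 1 + 1 / 2)) := by
  have hΓ : 0 < Gamma ((n : ℝ) / 2 + 1) := Gamma_pos_of_pos (by positivity)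
  have hπ : π ^ (((n + 1 : ℕ) : ℝ) / 2) = π ^ ((n : ℝ) / 2) * √π := by
    rw [sqrt_eq_rpow, ← rpow_add pi_pos]
    push_cast
    ring_nf
  rw [unitBallVolume, unitBallVolume, hπ, Gamma_one_half_eq,
    show ((n + 1 : ℕ) : ℝ) / 2 + 1 = (n : ℝ) / 2 + 1 + 1 / 2 by push_cast; ring]
  field_simp

/-- Volume of a spherical cap of height `h` of the ball of radius `r` in `ℝ^d`:
`(1/2) · V_d · r^d · I_{(2rh-h²)/r²}((d+1)/2, 1/2)`, where
`V_d = π^{d/2}/Γ(d/2+1)`. -/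
theorem volume_spherical_cap
    (d : ℕ) (hd : 1 ≤ d) (r h : ℝ) (hr : 0 < r) (hh0 : 0 ≤ h) (hhr : h ≤ r) :
    (volume {x : EuclideanSpace ℝ (Fin d) | ‖x‖ ≤ r ∧ r - h ≤ x ⟨0, hd⟩}).toReal =
      (1 / 2) * (π ^ ((d : ℝ) / 2) / Real.Gamma ((d : ℝ) / 2 + 1)) * r ^ (d : ℕ) *
        regIncBeta ((2 * r * h - h ^ 2) / r ^ 2) (((d : ℝ) + 1) / 2) (1 / 2) := by
  obtain ⟨n, rfl⟩ : ∃ n, d = n + 1 := ⟨d - 1, by omega⟩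
  have hc : 0 ≤ r - h := by linarith
  have hcr : r - h ≤ r := by linarith
  have hpow : r ^ (2 * ((n : ℝ) / 2) + 1) = r ^ (n + 1) := by
    rw [← rpow_natCast]
    push_cast
    ring_nf
  rw [show (⟨0, hd⟩ : Fin (n + 1)) = 0 from rfl, toReal_volume_cap n hr.le (by linarith) hcr,
    ← unitBallVolume, unitBallVolume_succ, regIncBeta,
    show (2 * r * h - h ^ 2) / r ^ 2 = (r ^ 2 - (r - h) ^ 2) / r ^ 2 by ring,
    show (((n + 1 : ℕ) : ℝ) + 1) / 2 = (n : ℝ) / 2 + 1 by push_cast; ring,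
    add_sub_cancel_right, show (1 / 2 : ℝ) - 1 = -(1 / 2) by norm_num,
    integral_rpow_mul_one_sub_rpow_neg_half _ hr hc hcr, hpow]
  field_simp
end

section
/- Let f : ℝ^d → ℝ be convex with f(0) = 0 and ∇f(0) = 0, and suppose ∇f is L-Lipschitz. Let π ∝ exp(-f) and m = ∫ ‖x‖ dπ(x). Then the Gaussian μ₀ = N(0, L^{-1}·I_d) satisfies R_∞(μ₀ ‖ π) ≤ 2 + (d/2)·ln(m²·L), where R_∞(μ‖π) = ln ‖dμ/dπ‖_{L^∞(π)} is the infinite Rényi divergence. -/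
/-!
Convexity and `∇f 0 = 0` give `0 ≤ f`, and `L`-smoothness gives `f x ≤ L ‖x‖² / 2`, so the
log-ratio of the two densities is at most `(d / 2) log (L / 2π) + log Z`.  For the normaliser
`Z = ∫ exp (-f)`, Markov's inequality puts at least half of the mass of `π` in the ball of
radius `2m`, on which `exp (-f) ≤ 1`; hence `Z ≤ 2 vol (B(0, 2m))`, and the volume of Euclidean
balls together with `2 · 2^(d/2) ≤ e² Γ(d/2 + 1)` gives `Z ≤ e² (2π m²)^(d/2)`.

That `m` is finite is the exponential tail of log-concave densities: the convex sublevel set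
`{f ≤ 1}` has finite volume and contains a ball around `0`, hence is bounded, so `f` grows
linearly.
-/

open MeasureTheory Real Set Filter Metric
open scoped RealInnerProductSpace ENNReal Nat

section Gradient

variable {E : Type*} [NormedAddCommGroup E] [InnerProductSpace ℝ E] {f : E → ℝ}

theorem ConvexOn.add_inner_gradient_le [CompleteSpace E] (hf : ConvexOn ℝ univ f) {x : E}
    (hx : DifferentiableAt ℝ f x) (y : E) : f x + ⟪gradient f x, y - x⟫ ≤ f y := by
  set ψ : ℝ → ℝ := fun t => f (x + t • (y - x))
  have hψ : ConvexOn ℝ univ ψ := by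
    simpa [ψ, Function.comp_def, AffineMap.lineMap_apply_module', add_comm, sub_smul, smul_sub]
      using hf.comp_affineMap (AffineMap.lineMap x y)
  have hderiv : HasDerivAt ψ (fderiv ℝ f x (y - x)) 0 := by
    refine hx.hasFDerivAt.comp_hasDerivAt_of_eq 0 ?_ (by simp)
    simpa using ((hasDerivAt_id (0 : ℝ)).smul_const (y - x)).const_add x
  have := hψ.le_slope_of_hasDerivAt trivial trivial zero_lt_one hderiv
  simp only [slope_def_field, ψ, one_smul, zero_smul, add_zero, sub_zero, div_one,
    add_sub_cancel] at this
  rw [gradient, InnerProductSpace.toDual_symm_apply]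
  linarith

theorem le_add_inner_gradient_add_sq_of_lipschitz [CompleteSpace E] {L : ℝ}
    (hf : Differentiable ℝ f)
    (hlip : ∀ x y, ‖gradient f x - gradient f y‖ ≤ L * ‖x - y‖) (x y : E) :
    f y ≤ f x + ⟪gradient f x, y - x⟫ + L / 2 * ‖y - x‖ ^ 2 := by
  set v := y - x
  set ψ : ℝ → ℝ := fun t =>
    f (x + t • v) - t * ⟪gradient f x, v⟫ - L / 2 * t ^ 2 * ‖v‖ ^ 2
  have hderiv : ∀ t, HasDerivAt ψ
      (⟪gradient f (x + t • v), v⟫ - ⟪gradient f x, v⟫ - L * t * ‖v‖ ^ 2) t := by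
    intro t
    have hline : HasDerivAt (fun s : ℝ => x + s • v) v t := by
      simpa using ((hasDerivAt_id t).smul_const v).const_add x
    have hf' := (hf (x + t • v)).hasGradientAt.hasFDerivAt.comp_hasDerivAt t hline
    rw [InnerProductSpace.toDual_apply_apply] at hf'
    refine ((hf'.sub ((hasDerivAt_id t).mul_const ⟪gradient f x, v⟫)).sub
      (((hasDerivAt_pow 2 t).const_mul (L / 2)).mul_const (‖v‖ ^ 2))).congr_deriv ?_
    simp only [Nat.cast_ofNat]
    ring
  have hanti : AntitoneOn ψ (Icc 0 1) := by
    refine antitoneOn_of_hasDerivWithinAt_nonpos (convex_Icc 0 1)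
      (fun t _ => (hderiv t).continuousAt.continuousWithinAt)
      (fun t _ => (hderiv t).hasDerivWithinAt) fun t ht => ?_
    rw [interior_Icc] at ht
    have h := (real_inner_le_norm (gradient f (x + t • v) - gradient f x) v).trans
      (mul_le_mul_of_nonneg_right (hlip (x + t • v) x) (norm_nonneg v))
    rw [inner_sub_left, add_sub_cancel_left, norm_smul, Real.norm_of_nonneg ht.1.le] at h
    nlinarith
  have := hanti ⟨le_rfl, zero_le_one⟩ ⟨zero_le_one, le_rfl⟩ zero_le_one
  simp only [ψ, one_smul, zero_smul, add_zero, one_mul, zero_mul, one_pow, sub_zero, ne_eq,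
    OfNat.ofNat_ne_zero, not_false_eq_true, zero_pow, mul_zero, mul_one, v,
    add_sub_cancel] at this
  linarith

variable [FiniteDimensional ℝ E]

theorem ConvexOn.dense_setOf_differentiableAt (hf : ConvexOn ℝ univ f) :
    Dense {x | DifferentiableAt ℝ f x} := by
  borelize E
  rw [dense_iff_inter_open]
  rintro U hU ⟨u, hu⟩
  obtain ⟨K, t, ht, hK⟩ := hf.locallyLipschitz u
  obtain ⟨ε, hε, hball⟩ := Metric.mem_nhds_iff.1 (inter_mem ht (hU.mem_nhds hu))
  have hae := (hK.mono (hball.trans inter_subset_left)).ae_differentiableWithinAt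
    (μ := Measure.addHaar) measurableSet_ball
  have : (ae (Measure.addHaar.restrict (ball u ε))).NeBot :=
    ae_restrict_neBot.2 (measure_ball_pos _ u hε).ne'
  obtain ⟨z, hz, hzu⟩ := (hae.and (ae_restrict_mem measurableSet_ball)).exists
  exact ⟨z, (hball hzu).2, hz.differentiableAt (isOpen_ball.mem_nhds hzu)⟩

theorem ConvexOn.add_inner_gradient_le_of_continuous (hf : ConvexOn ℝ univ f)
    (hg : Continuous (gradient f)) (x y : E) : f x + ⟪gradient f x, y - x⟫ ≤ f y := by
  have hclosed : IsClosed {z | f z + ⟪gradient f z, y - z⟫ ≤ f y} :=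
    isClosed_le ((continuousOn_univ.1 (hf.continuousOn isOpen_univ)).add
      (hg.inner (continuous_const.sub continuous_id))) continuous_const
  exact hclosed.closure_subset_iff.2 (fun z hz => hf.add_inner_gradient_le hz y)
    (hf.dense_setOf_differentiableAt x)

theorem ConvexOn.hasGradientAt_of_continuous (hf : ConvexOn ℝ univ f)
    (hg : Continuous (gradient f)) (x : E) : HasGradientAt f (gradient f x) x := by
  have hsub := hf.add_inner_gradient_le_of_continuous hg
  rw [hasGradientAt_iff_isLittleO, Asymptotics.isLittleO_iff]
  intro c hc
  -- the remainder is squeezed between `0` and `⟪∇f y - ∇f x, y - x⟫`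
  filter_upwards [(hg.tendsto x).eventually (closedBall_mem_nhds _ hc)] with y hy
  have hlow := hsub x y
  have hup : f y - f x ≤ ⟪gradient f y, y - x⟫ := by
    have := hsub y x
    rw [← neg_sub y x, inner_neg_right] at this
    linarith
  have hcs : ⟪gradient f y - gradient f x, y - x⟫ ≤ c * ‖y - x‖ :=
    (real_inner_le_norm _ _).trans
      (mul_le_mul_of_nonneg_right (by rwa [← dist_eq_norm]) (norm_nonneg _))
  rw [inner_sub_left] at hcs
  rw [Real.norm_eq_abs, abs_le]
  constructor <;> nlinarith [norm_nonneg (y - x)]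

end Gradient

section SublevelSets

variable {E : Type*} [NormedAddCommGroup E] [NormedSpace ℝ E] {f : E → ℝ}

theorem ConvexOn.ball_smul_subset_setOf_le {c δ s : ℝ} {x : E} (hf : ConvexOn ℝ univ f)
    (hball : ∀ w ∈ ball (0 : E) δ, f w ≤ c) (hx : f x ≤ c) (hs0 : 0 ≤ s) (hs1 : s < 1) :
    ball (s • x) ((1 - s) * δ) ⊆ {y | f y ≤ c} := by
  intro y hy
  set w := (1 - s)⁻¹ • (y - s • x)
  have hw : w ∈ ball (0 : E) δ := by
    rw [mem_ball_zero_iff, norm_smul, norm_inv, Real.norm_of_nonneg (by linarith),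
      inv_mul_lt_iff₀ (by linarith), ← dist_eq_norm]
    exact hy
  have hy_eq : y = s • x + (1 - s) • w := by
    simp [w, smul_smul, mul_inv_cancel₀ (by linarith : 1 - s ≠ 0)]
  have hconv := hf.2 (mem_univ x) (mem_univ w) hs0 (by linarith) (add_sub_cancel s 1)
  rw [← hy_eq, smul_eq_mul, smul_eq_mul] at hconv
  show f y ≤ c
  nlinarith [hball w hw]

theorem ConvexOn.norm_div_sub_one_le {R : ℝ} (hf : ConvexOn ℝ univ f) (hf0 : f 0 = 0)
    (hf_nonneg : ∀ x, 0 ≤ f x) (hR : ∀ x, f x ≤ 1 → ‖x‖ < R) (x : E) : ‖x‖ / R - 1 ≤ f x := by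
  have hR0 : 0 < R := by simpa using hR 0 (by rw [hf0]; exact zero_le_one)
  rcases lt_or_ge ‖x‖ R with hx | hx
  · linarith [(div_lt_one hR0).2 hx, hf_nonneg x]
  have hx0 : 0 < ‖x‖ := hR0.trans_le hx
  set s := R / ‖x‖
  have hs1 : s ≤ 1 := (div_le_one hx0).2 hx
  have hconv :=
    hf.2 (mem_univ x) (mem_univ 0) (by positivity) (by linarith) (add_sub_cancel s 1)
  rw [smul_zero, add_zero, hf0, smul_zero, add_zero, smul_eq_mul] at hconv
  have hnorm : ‖s • x‖ = R := by
    rw [norm_smul, Real.norm_of_nonneg (by positivity), div_mul_cancel₀ _ hx0.ne']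
  have h1 : 1 < s * f x := (lt_of_not_ge fun h => (hR _ h).ne hnorm).trans_le hconv
  rw [div_mul_eq_mul_div, one_lt_div hx0] at h1
  rw [div_sub_one hR0.ne', div_le_iff₀ hR0]
  linarith

variable [MeasurableSpace E] [BorelSpace E] (μ : Measure E) [μ.IsAddHaarMeasure]

/-- The `N` balls are disjoint, centred on the segment from `0` to `x / 2` at distance `δ` apart,
and lie in the convex hull of `ball 0 δ` and `x`. -/
theorem ConvexOn.natCast_mul_measure_ball_le {c δ : ℝ} {x : E} (hf : ConvexOn ℝ univ f)
    (hδ : 0 < δ) (hball : ∀ w ∈ ball (0 : E) δ, f w ≤ c) (hx : f x ≤ c) (N : ℕ)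
    (hN : 2 * N * δ ≤ ‖x‖) : N * μ (ball 0 (δ / 2)) ≤ μ {y | f y ≤ c} := by
  rcases N.eq_zero_or_pos with rfl | hNpos
  · simp
  have hx0 : 0 < ‖x‖ := lt_of_lt_of_le (by positivity) hN
  set center : ℕ → E := fun k => (k * δ / ‖x‖) • x
  have hdisj : (Finset.range N : Set ℕ).PairwiseDisjoint fun k => ball (center k) (δ / 2) := by
    intro k _ j _ hkj
    apply ball_disjoint_ball
    have hkj' : (1 : ℝ) ≤ |(k : ℝ) - j| := by
      exact_mod_cast Int.one_le_abs (sub_ne_zero.2 (Int.ofNat_inj.not.2 hkj))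
    rw [dist_eq_norm, ← sub_smul, norm_smul, ← sub_div, ← sub_mul, Real.norm_eq_abs, abs_div,
      abs_mul, abs_of_pos hδ, abs_of_pos hx0, div_mul_cancel₀ _ hx0.ne']
    nlinarith
  have hsub : ∀ k ∈ Finset.range N, ball (center k) (δ / 2) ⊆ {y | f y ≤ c} := by
    intro k hk
    have hkN : (k : ℝ) + 1 ≤ N := by exact_mod_cast Finset.mem_range.1 hk
    have hs : k * δ / ‖x‖ ≤ 1 / 2 := by
      rw [div_le_iff₀ hx0]
      nlinarith
    refine (ball_subset_ball ?_).trans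
      (hf.ball_smul_subset_setOf_le hball hx (by positivity) (by linarith))
    nlinarith
  calc N * μ (ball 0 (δ / 2)) = ∑ k ∈ Finset.range N, μ (ball (center k) (δ / 2)) := by
        simp [Measure.addHaar_ball_center]
    _ = μ (⋃ k ∈ Finset.range N, ball (center k) (δ / 2)) :=
        (measure_biUnion_finset hdisj fun _ _ => measurableSet_ball).symm
    _ ≤ μ {y | f y ≤ c} := measure_mono (iUnion₂_subset hsub)

variable [FiniteDimensional ℝ E]

theorem ConvexOn.exists_forall_le_norm_lt {c : ℝ} (hf : ConvexOn ℝ univ f) (hc : f 0 < c)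
    (hint : Integrable (fun x => exp (-f x)) μ) : ∃ R, ∀ x, f x ≤ c → ‖x‖ < R := by
  have hcont : Continuous f := continuousOn_univ.1 (hf.continuousOn isOpen_univ)
  obtain ⟨δ, hδ, hball⟩ : ∃ δ > 0, ∀ w ∈ ball (0 : E) δ, f w ≤ c :=
    eventually_nhds_iff_ball.1 ((hcont.tendsto 0).eventually (eventually_le_nhds hc))
  have hfin : μ {y | f y ≤ c} ≠ ∞ := by
    have hmarkov := mul_meas_ge_le_lintegral₀ hint.aemeasurable.ennreal_ofReal
      (ENNReal.ofReal (exp (-c)))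
    have hmono :
        {y | f y ≤ c} ⊆ {y | ENNReal.ofReal (exp (-c)) ≤ ENNReal.ofReal (exp (-f y))} :=
      fun y hy => ENNReal.ofReal_le_ofReal (exp_le_exp.2 (neg_le_neg hy))
    refine (ENNReal.lt_top_of_mul_ne_top_right ?_ (ENNReal.ofReal_pos.2 (exp_pos (-c))).ne').ne
    exact (((mul_le_mul_of_nonneg_left (measure_mono hmono) zero_le).trans hmarkov).trans_lt
      hint.lintegral_lt_top).ne
  obtain ⟨K, hK⟩ := ENNReal.exists_nat_mul_gt (measure_ball_pos μ 0 (half_pos hδ)).ne' hfin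
  exact ⟨2 * K * δ, fun x hx => lt_of_not_ge fun hxR =>
    (hK.trans_le (hf.natCast_mul_measure_ball_le μ hδ hball hx K hxR)).false⟩

theorem integrable_norm_mul_exp_neg_mul_norm {c : ℝ} (hc : 0 < c) :
    Integrable (fun x : E => ‖x‖ * exp (-(c * ‖x‖))) μ := by
  set k := Module.finrank ℝ E
  refine ((integrable_one_add_norm (μ := μ) (r := k + 1) (by linarith)).const_mul
    ((k + 2)! / c ^ (k + 2) * exp c)).mono' (by fun_prop) (ae_of_all _ fun x => ?_)
  set t := ‖x‖
  have ht : 0 ≤ t := norm_nonneg x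
  have hpoly : c ^ (k + 2) * ((1 + t) ^ (k + 2) * exp (-(c * t))) ≤ (k + 2)! * exp c := by
    have h := Real.pow_div_factorial_le_exp (x := c * (1 + t)) (by positivity) (k + 2)
    rw [div_le_iff₀ (by positivity), mul_pow, mul_one_add, exp_add] at h
    calc c ^ (k + 2) * ((1 + t) ^ (k + 2) * exp (-(c * t)))
        = c ^ (k + 2) * (1 + t) ^ (k + 2) * exp (-(c * t)) := by ring
      _ ≤ exp c * exp (c * t) * (k + 2)! * exp (-(c * t)) := by gcongr
      _ = (k + 2)! * exp c * (exp (c * t) * exp (-(c * t))) := by ring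
      _ = (k + 2)! * exp c := by rw [← exp_add, add_neg_cancel, exp_zero, mul_one]
  rw [Real.norm_of_nonneg (by positivity), Real.rpow_neg (by positivity),
    show ((k : ℝ) + 1) = ((k + 1 : ℕ) : ℝ) by push_cast; ring, Real.rpow_natCast,
    ← div_eq_mul_inv, le_div_iff₀ (by positivity), div_mul_eq_mul_div,
    le_div_iff₀ (by positivity)]
  calc t * exp (-(c * t)) * (1 + t) ^ (k + 1) * c ^ (k + 2)
      ≤ c ^ (k + 2) * ((1 + t) ^ (k + 2) * exp (-(c * t))) := by
        rw [pow_succ (1 + t) (k + 1)]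
        have : 0 ≤ (1 + t) ^ (k + 1) * exp (-(c * t)) * c ^ (k + 2) := by positivity
        nlinarith
    _ ≤ (k + 2)! * exp c := hpoly

theorem ConvexOn.integrable_norm_mul_exp_neg (hf : ConvexOn ℝ univ f) (hf0 : f 0 = 0)
    (hf_nonneg : ∀ x, 0 ≤ f x) (hint : Integrable (fun x => exp (-f x)) μ) :
    Integrable (fun x => ‖x‖ * exp (-f x)) μ := by
  obtain ⟨R, hR⟩ := hf.exists_forall_le_norm_lt μ (hf0 ▸ zero_lt_one) hint
  have hR0 : 0 < R := by simpa using hR 0 (by rw [hf0]; exact zero_le_one)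
  have hcont : Continuous f := continuousOn_univ.1 (hf.continuousOn isOpen_univ)
  refine ((integrable_norm_mul_exp_neg_mul_norm μ (inv_pos.2 hR0)).const_mul (exp 1)).mono'
    (continuous_norm.mul hcont.neg.rexp).aestronglyMeasurable (ae_of_all _ fun x => ?_)
  have hlow := hf.norm_div_sub_one_le hf0 hf_nonneg hR x
  rw [Real.norm_of_nonneg (by positivity), mul_left_comm, ← exp_add]
  gcongr
  rw [inv_mul_eq_div]
  linarith

end SublevelSets

theorem integral_le_two_mul_setIntegral_closedBall {E : Type*} [NormedAddCommGroup E]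
    [MeasurableSpace E] [OpensMeasurableSpace E] {μ : Measure E} {w : E → ℝ} {m : ℝ}
    (hw : 0 ≤ w) (hwi : Integrable w μ) (hnwi : Integrable (fun x => ‖x‖ * w x) μ)
    (hm0 : 0 ≤ m) (hm : ∫ x, ‖x‖ * w x ∂μ = m * ∫ x, w x ∂μ) :
    ∫ x, w x ∂μ ≤ 2 * ∫ x in closedBall 0 (2 * m), w x ∂μ := by
  set S := closedBall (0 : E) (2 * m)
  have hsplit := integral_add_compl (s := S) measurableSet_closedBall hwi
  suffices 2 * ∫ x in Sᶜ, w x ∂μ ≤ ∫ x, w x ∂μ by linarith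
  rcases hm0.eq_or_lt with rfl | hmpos
  · -- all the mass sits at the origin
    rw [zero_mul, integral_eq_zero_iff_of_nonneg (fun x => mul_nonneg (norm_nonneg x) (hw x))
      hnwi] at hm
    rw [setIntegral_eq_zero_of_ae_eq_zero, mul_zero]
    · exact integral_nonneg hw
    filter_upwards [hm] with x hx hxS
    have : 0 < ‖x‖ := by simpa [S] using hxS
    simpa [this.ne'] using hx
  · have hmarkov : 2 * m * ∫ x in Sᶜ, w x ∂μ ≤ ∫ x, ‖x‖ * w x ∂μ := by
      rw [← integral_const_mul]
      refine (setIntegral_mono_on (hwi.const_mul _).integrableOn hnwi.integrableOn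
        measurableSet_closedBall.compl fun x hx => ?_).trans
        (setIntegral_le_integral hnwi (ae_of_all _ fun x => mul_nonneg (norm_nonneg x) (hw x)))
      have : 2 * m < ‖x‖ := by simpa [S] using hx
      exact mul_le_mul_of_nonneg_right this.le (hw x)
    nlinarith

theorem two_mul_two_rpow_le_exp_two_mul_Gamma (d : ℕ) :
    2 * 2 ^ ((d : ℝ) / 2) ≤ exp 2 * Gamma (d / 2 + 1) := by
  have hexp : 7 < exp 2 := by
    have := exp_one_gt_d9
    rw [show (2 : ℝ) = 1 + 1 by norm_num, exp_add]
    nlinarith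
  have hsqrt2 : (2 : ℝ) ^ ((1 : ℝ) / 2) ≤ 3 / 2 := by
    rw [← sqrt_eq_rpow, sqrt_le_left (by norm_num)]
    norm_num
  have hsqrtπ : 17 / 10 ≤ √π := by
    rw [le_sqrt' (by norm_num)]
    linarith [pi_gt_three]
  have hGamma_three_halves : Gamma (1 / 2 + 1) = √π / 2 := by
    rw [Gamma_add_one (by norm_num), Gamma_one_half_eq]
    ring
  induction d using Nat.strong_induction_on with
  | _ d ih =>
  match d with
  | 0 => norm_num; linarith
  | 1 =>
    norm_num at hGamma_three_halves ⊢
    rw [hGamma_three_halves]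
    nlinarith
  | 2 => norm_num; linarith
  | 3 =>
    rw [show ((3 : ℕ) : ℝ) / 2 = 1 + 1 / 2 by norm_num, rpow_add two_pos, rpow_one,
      show (1 : ℝ) + 1 / 2 + 1 = 1 / 2 + 1 + 1 by ring, Gamma_add_one (by norm_num),
      hGamma_three_halves]
    nlinarith
  | n + 4 =>
    have hpow : (2 : ℝ) ^ (((n + 4 : ℕ) : ℝ) / 2) = 2 * 2 ^ (((n + 2 : ℕ) : ℝ) / 2) := by
      rw [← rpow_one_add' (by norm_num) (by positivity)]
      push_cast; ring_nf
    have hGamma : Gamma (((n + 4 : ℕ) : ℝ) / 2 + 1) =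
        (((n + 2 : ℕ) : ℝ) / 2 + 1) * Gamma (((n + 2 : ℕ) : ℝ) / 2 + 1) := by
      rw [← Gamma_add_one (by positivity)]
      push_cast; ring_nf
    have hfactor : (2 : ℝ) ≤ ((n + 2 : ℕ) : ℝ) / 2 + 1 := by
      push_cast; linarith [n.cast_nonneg (α := ℝ)]
    have hG := Gamma_pos_of_pos (by positivity : (0 : ℝ) < ((n + 2 : ℕ) : ℝ) / 2 + 1)
    rw [hpow, hGamma]
    calc 2 * (2 * 2 ^ (((n + 2 : ℕ) : ℝ) / 2))
        ≤ 2 * (exp 2 * Gamma (((n + 2 : ℕ) : ℝ) / 2 + 1)) :=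
          mul_le_mul_of_nonneg_left (ih (n + 2) (by omega)) two_pos.le
      _ ≤ (((n + 2 : ℕ) : ℝ) / 2 + 1) * (exp 2 * Gamma (((n + 2 : ℕ) : ℝ) / 2 + 1)) := by
        gcongr
      _ = exp 2 * ((((n + 2 : ℕ) : ℝ) / 2 + 1) * Gamma (((n + 2 : ℕ) : ℝ) / 2 + 1)) := by ring

theorem two_mul_volume_closedBall_le (d : ℕ) {m : ℝ} (hm : 0 ≤ m) :
    2 * volume.real (closedBall (0 : EuclideanSpace ℝ (Fin d)) (2 * m)) ≤
      exp 2 * (2 * π * m ^ 2) ^ ((d : ℝ) / 2) := by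
  rcases d.eq_zero_or_pos with rfl | hd
  · have hball : closedBall (0 : EuclideanSpace ℝ (Fin 0)) (2 * m) = univ :=
      Subsingleton.eq_univ_of_nonempty ⟨0, mem_closedBall_self (by positivity)⟩
    have hvol := (EuclideanSpace.volume_preserving_symm_measurableEquiv_toLp
      (Fin 0)).measure_preimage_equiv univ
    rw [preimage_univ] at hvol
    rw [hball, Measure.real, hvol]
    simp only [volume_pi, Measure.pi_univ, Finset.univ_eq_empty, Finset.prod_empty,
      ENNReal.toReal_one, CharP.cast_eq_zero, zero_div, rpow_zero, mul_one]
    linarith [add_one_le_exp 2]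
  have : Nonempty (Fin d) := ⟨⟨0, hd⟩⟩
  rw [Measure.real, EuclideanSpace.volume_closedBall, Fintype.card_fin, ENNReal.toReal_mul,
    ENNReal.toReal_pow, ENNReal.toReal_ofReal (by positivity),
    ENNReal.toReal_ofReal (by positivity)]
  have hsplit :
      (2 * π * m ^ 2) ^ ((d : ℝ) / 2) = 2 ^ ((d : ℝ) / 2) * π ^ ((d : ℝ) / 2) * m ^ d := by
    rw [mul_rpow (by positivity) (by positivity), mul_rpow (by positivity) pi_pos.le,
      ← rpow_natCast_mul hm, show ((2 : ℕ) : ℝ) * ((d : ℝ) / 2) = d by push_cast; ring,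
      rpow_natCast]
  have hsqrt : √π ^ d = π ^ ((d : ℝ) / 2) := by
    rw [sqrt_eq_rpow, ← rpow_mul_natCast pi_pos.le]
    ring_nf
  have htwo : (2 : ℝ) ^ d = 2 ^ ((d : ℝ) / 2) * 2 ^ ((d : ℝ) / 2) := by
    rw [← rpow_add two_pos, add_halves, rpow_natCast]
  have hG := Gamma_pos_of_pos (by positivity : (0 : ℝ) < d / 2 + 1)
  rw [hsplit, hsqrt, mul_pow, htwo]
  calc 2 * (2 ^ ((d : ℝ) / 2) * 2 ^ ((d : ℝ) / 2) * m ^ d *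
        (π ^ ((d : ℝ) / 2) / Gamma (d / 2 + 1)))
      = 2 * 2 ^ ((d : ℝ) / 2) * (2 ^ ((d : ℝ) / 2) * π ^ ((d : ℝ) / 2) * m ^ d) /
          Gamma (d / 2 + 1) := by ring
    _ ≤ exp 2 * Gamma (d / 2 + 1) * (2 ^ ((d : ℝ) / 2) * π ^ ((d : ℝ) / 2) * m ^ d) /
          Gamma (d / 2 + 1) := by
        gcongr ?_ * _ / _; exact two_mul_two_rpow_le_exp_two_mul_Gamma d
    _ = exp 2 * (2 ^ ((d : ℝ) / 2) * π ^ ((d : ℝ) / 2) * m ^ d) := by field_simp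

theorem Real.log_rpow_of_nonneg {x : ℝ} (hx : 0 ≤ x) (y : ℝ) : log (x ^ y) = y * log x := by
  rcases hx.eq_or_lt with rfl | hx
  · rcases eq_or_ne y 0 with rfl | hy
    · simp
    · simp [zero_rpow hy]
  · exact log_rpow hx y

theorem log_gaussian_div_le {k L Z m a q : ℝ} (hL : 0 < L) (hZ : 0 < Z)
    (hZ_le : Z ≤ exp 2 * (2 * π * m ^ 2) ^ k) (ha : a ≤ L / 2 * q) :
    log ((L / (2 * π)) ^ k * exp (-L * q / 2) / (exp (-a) / Z)) ≤ 2 + k * log (m ^ 2 * L) := by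
  have hbase : 0 < L / (2 * π) := by positivity
  have hscaled : Z * (L / (2 * π)) ^ k ≤ exp 2 * (m ^ 2 * L) ^ k := by
    calc Z * (L / (2 * π)) ^ k ≤ exp 2 * (2 * π * m ^ 2) ^ k * (L / (2 * π)) ^ k := by gcongr
      _ = exp 2 * (m ^ 2 * L) ^ k := by
        rw [mul_assoc, ← mul_rpow (by positivity) hbase.le]
        congr 2
        field_simp
  have hpos : 0 < Z * (L / (2 * π)) ^ k := by positivity
  have hlog := log_le_log hpos hscaled
  rw [log_mul hZ.ne' (rpow_pos_of_pos hbase k).ne', log_rpow hbase,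
    log_mul (exp_pos 2).ne' (pos_of_mul_pos_right (hpos.trans_le hscaled) (exp_pos 2).le).ne',
    log_exp, Real.log_rpow_of_nonneg (by positivity)] at hlog
  rw [log_div (by positivity) (by positivity), log_mul (by positivity) (exp_pos _).ne',
    log_rpow hbase, log_exp, log_div (exp_pos _).ne' hZ.ne', log_exp]
  linarith

theorem ConvexOn.integral_exp_neg_le {d : ℕ} {f : EuclideanSpace ℝ (Fin d) → ℝ} {m : ℝ}
    (hf : ConvexOn ℝ univ f) (hf0 : f 0 = 0) (hf_nonneg : ∀ x, 0 ≤ f x)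
    (hint : Integrable fun x => exp (-f x)) (hm0 : 0 ≤ m)
    (hm : ∫ x, ‖x‖ * exp (-f x) = m * ∫ x, exp (-f x)) :
    ∫ x, exp (-f x) ≤ exp 2 * (2 * π * m ^ 2) ^ ((d : ℝ) / 2) :=
  calc ∫ x, exp (-f x) ≤ 2 * ∫ x in closedBall 0 (2 * m), exp (-f x) :=
        integral_le_two_mul_setIntegral_closedBall (fun x => (exp_pos _).le) hint
          (hf.integrable_norm_mul_exp_neg volume hf0 hf_nonneg hint) hm0 hm
    _ ≤ 2 * ∫ _ in closedBall (0 : EuclideanSpace ℝ (Fin d)) (2 * m), (1 : ℝ) :=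
        mul_le_mul_of_nonneg_left (setIntegral_mono_on hint.integrableOn
          (integrableOn_const measure_closedBall_lt_top.ne) measurableSet_closedBall
          fun x _ => exp_le_one_iff.2 (neg_nonpos.2 (hf_nonneg x))) two_pos.le
    _ = 2 * volume.real (closedBall (0 : EuclideanSpace ℝ (Fin d)) (2 * m)) := by
        rw [setIntegral_const, smul_eq_mul, mul_one]
    _ ≤ exp 2 * (2 * π * m ^ 2) ^ ((d : ℝ) / 2) := two_mul_volume_closedBall_le d hm0

theorem renyi_infinity_initialization_general
    (d : ℕ) (L : ℝ) (hL : 0 < L)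
    (f : EuclideanSpace ℝ (Fin d) → ℝ)
    (hconv : ConvexOn ℝ univ f)
    (hf0 : f 0 = 0) (hgrad0 : gradient f 0 = 0)
    (hlip : ∀ x y, ‖gradient f x - gradient f y‖ ≤ L * ‖x - y‖)
    (Z : ℝ) (hZ : Z = ∫ x, Real.exp (-f x)) (hZpos : 0 < Z)
    (P : Measure (EuclideanSpace ℝ (Fin d)))
    (m : ℝ) (hm : m = ∫ x, ‖x‖ * (Real.exp (-f x) / Z))
    (μ₀dens : EuclideanSpace ℝ (Fin d) → ℝ)
    (hμ₀ : μ₀dens = fun x => (L / (2 * Real.pi)) ^ ((d : ℝ) / 2) *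
      Real.exp (-L * ‖x‖ ^ 2 / 2)) :
    ∀ᵐ x ∂P, Real.log (μ₀dens x / (Real.exp (-f x) / Z)) ≤
      2 + (d : ℝ) / 2 * Real.log (m ^ 2 * L) := by
  have hgrad_cont : Continuous (gradient f) :=
    (LipschitzWith.of_dist_le_mul (K := L.toNNReal) fun x y => by
      rw [Real.coe_toNNReal _ hL.le, dist_eq_norm, dist_eq_norm]; exact hlip x y).continuous
  have hsub := hconv.add_inner_gradient_le_of_continuous hgrad_cont
  have hf_nonneg : ∀ x, 0 ≤ f x := fun x => by simpa [hf0, hgrad0] using hsub 0 x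
  have hf_le : ∀ x, f x ≤ L / 2 * ‖x‖ ^ 2 := fun x => by
    simpa [hf0, hgrad0] using le_add_inner_gradient_add_sq_of_lipschitz
      (fun y => (hconv.hasGradientAt_of_continuous hgrad_cont y).differentiableAt) hlip 0 x
  have hint : Integrable fun x => exp (-f x) := by
    by_contra h
    rw [hZ, integral_undef h] at hZpos
    exact hZpos.false
  have hm0 : 0 ≤ m := hm ▸ integral_nonneg fun x => by positivity
  have hmZ : ∫ x, ‖x‖ * exp (-f x) = m * ∫ x, exp (-f x) := by
    simp_rw [hm, ← hZ, ← mul_div_assoc]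
    rw [integral_div, div_mul_cancel₀ _ hZpos.ne']
  have hZ_le := hconv.integral_exp_neg_le hf0 hf_nonneg hint hm0 hmZ
  rw [← hZ] at hZ_le
  subst hμ₀
  exact ae_of_all _ fun x => log_gaussian_div_le hL hZpos hZ_le (hf_le x)

/-- Initialization bound: if `f` is convex, `f 0 = 0`, `∇f 0 = 0`, `∇f` is
`L`-Lipschitz, `π ∝ exp (-f)` and `m = ∫ ‖x‖ dπ`, then the Gaussian
`μ₀ = N(0, L⁻¹ I_d)` satisfies `R_∞(μ₀ ‖ π) ≤ 2 + (d/2) ln (m² L)`,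
i.e. `ln (dμ₀/dπ) ≤ 2 + (d/2) ln (m² L)` π-almost everywhere. -/
theorem renyi_infinity_initialization
    (d : ℕ) (L : ℝ) (hL : 0 < L)
    (f : EuclideanSpace ℝ (Fin d) → ℝ)
    (hconv : ConvexOn ℝ univ f)
    (hf0 : f 0 = 0) (hgrad0 : gradient f 0 = 0)
    (hlip : ∀ x y, ‖gradient f x - gradient f y‖ ≤ L * ‖x - y‖)
    (Z : ℝ) (hZ : Z = ∫ x, Real.exp (-f x)) (hZpos : 0 < Z)
    (P : Measure (EuclideanSpace ℝ (Fin d)))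
    (hP : P = volume.withDensity (fun x => ENNReal.ofReal (Real.exp (-f x) / Z)))
    (m : ℝ) (hm : m = ∫ x, ‖x‖ * (Real.exp (-f x) / Z))
    (μ₀dens : EuclideanSpace ℝ (Fin d) → ℝ)
    (hμ₀ : μ₀dens = fun x => (L / (2 * Real.pi)) ^ ((d : ℝ) / 2) *
      Real.exp (-L * ‖x‖ ^ 2 / 2)) :
    ∀ᵐ x ∂P, Real.log (μ₀dens x / (Real.exp (-f x) / Z)) ≤
      2 + (d : ℝ) / 2 * Real.log (m ^ 2 * L) :=
  renyi_infinity_initialization_general d L hL f hconv hf0 hgrad0 hlip Z hZ hZpos P m hm μ₀dens hμ₀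
end
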